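/- Let x_1, x_2, x_3, ... be the sequence of rational functions defined by x_{n+1} = (x_n^2+1)/x_{n-1}. Then every term x_n of the sequence is a Laurent polynomial in x_1 and x_2 with nonnegative integer coefficients. -/

import Mathlib

noncomputable section

/-- The ambient field `ℚ(x₁, x₂)` of rational functions in two variables. -/
abbrev Kfield : Type := FractionRing (MvPolynomial (Fin 2) ℚ)

/-- The first indeterminate `x₁`. -/
def X1 : Kfield := algebraMap (MvPolynomial (Fin 2) ℚ) Kfield (MvPolynomial.X 0)

/-- The second indeterminate `x₂`. -/
def X2 : Kfield := algebraMap (MvPolynomial (Fin 2) ℚ) Kfield (MvPolynomial.X 1)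

open MvPolynomial

/-- Pair of ℕ-polynomial sequences: `(pq k).1` is the numerator of `x (k+2)` (up to a
factor `X 1`), with only positive recurrences. -/
def pq : ℕ → MvPolynomial (Fin 2) ℕ × MvPolynomial (Fin 2) ℕ
  | 0 => (1, 1)
  | k + 1 =>
      ((X 1) ^ 2 * (pq k).1 + (pq k).2,
       (X 1) ^ 2 * (pq k).1 + (pq k).2 + (X 0) ^ 2 * (pq k).2)

/-- Evaluation ring hom into the field. -/
def Ehom : MvPolynomial (Fin 2) ℕ →+* Kfield :=
  eval₂Hom (Nat.castRingHom Kfield) ![X1, X2]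

lemma Ehom_eq (p : MvPolynomial (Fin 2) ℕ) :
    Ehom p = algebraMap (MvPolynomial (Fin 2) ℚ) Kfield
      (MvPolynomial.map (Nat.castRingHom ℚ) p) := by
  have h : Ehom = (algebraMap (MvPolynomial (Fin 2) ℚ) Kfield).comp
      (MvPolynomial.map (Nat.castRingHom ℚ) :
        MvPolynomial (Fin 2) ℕ →+* MvPolynomial (Fin 2) ℚ) := by
    apply MvPolynomial.ringHom_ext
    · intro n
      simp [Ehom]
    · intro i
      fin_cases i
      · simp [Ehom, X1]
      · simp [Ehom, X2]
  rw [h]; rfl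

lemma constantCoeff_pq (k : ℕ) :
    constantCoeff (pq k).1 = 1 ∧ constantCoeff (pq k).2 = 1 := by
  induction k with
  | zero => simp [pq]
  | succ n ih => simp [pq, ih.1, ih.2]

lemma Ehom_pq_ne (k : ℕ) : Ehom (pq k).1 ≠ 0 := by
  intro h
  rw [Ehom_eq] at h
  have h2 : MvPolynomial.map (Nat.castRingHom ℚ) (pq k).1 = 0 :=
    IsFractionRing.injective (MvPolynomial (Fin 2) ℚ) Kfield
      (by simpa using h)
  have h3 := congrArg constantCoeff h2
  rw [constantCoeff_map] at h3
  rw [(constantCoeff_pq k).1] at h3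
  simp at h3

lemma X1_ne : X1 ≠ 0 := by
  intro h
  have := IsFractionRing.injective (MvPolynomial (Fin 2) ℚ) Kfield
    (show algebraMap (MvPolynomial (Fin 2) ℚ) Kfield (MvPolynomial.X 0) = algebraMap _ _ 0 by
      simpa [X1] using h)
  exact MvPolynomial.X_ne_zero 0 this

lemma X2_ne : X2 ≠ 0 := by
  intro h
  have := IsFractionRing.injective (MvPolynomial (Fin 2) ℚ) Kfield
    (show algebraMap (MvPolynomial (Fin 2) ℚ) Kfield (MvPolynomial.X 1) = algebraMap _ _ 0 by
      simpa [X2] using h)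
  exact MvPolynomial.X_ne_zero 1 this

/-- Images of the numerator pair in the field. -/
def yK (k : ℕ) : Kfield := Ehom (pq k).1
def zK (k : ℕ) : Kfield := Ehom (pq k).2

lemma yK_ne (k : ℕ) : yK k ≠ 0 := Ehom_pq_ne k

lemma yK_zero : yK 0 = 1 := by simp [yK, pq]
lemma zK_zero : zK 0 = 1 := by simp [zK, pq]

lemma yK_succ (k : ℕ) : yK (k + 1) = X2 ^ 2 * yK k + zK k := by
  simp [yK, zK, pq, Ehom]

lemma zK_succ (k : ℕ) : zK (k + 1) = X2 ^ 2 * yK k + zK k + X1 ^ 2 * zK k := by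
  simp [yK, zK, pq, Ehom]

/-- Linear recurrence for `yK`. -/
lemma yK_lin (k : ℕ) :
    yK (k + 2) + X1 ^ 2 * X2 ^ 2 * yK k = (X1 ^ 2 + X2 ^ 2 + 1) * yK (k + 1) := by
  have h1 := yK_succ (k + 1)
  have h2 := zK_succ k
  have h3 := yK_succ k
  rw [h2] at h1
  linear_combination h1 - (X1 ^ 2 + 1) * h3

/-- The key quadratic identity. -/
lemma yK_quad (k : ℕ) :
    yK (k + 2) * yK k = yK (k + 1) ^ 2 + X1 ^ (2 * k + 2) * X2 ^ (2 * k) := by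
  induction k with
  | zero =>
      have h1 := yK_succ 1
      have h2 := yK_succ 0
      have h3 := zK_succ 0
      rw [yK_zero, zK_zero] at h2 h3
      rw [yK_zero]
      linear_combination h1 + h3 - (yK 1 + 1) * h2
  | succ n ih =>
      have L1 := yK_lin (n + 1)
      have L0 := yK_lin n
      linear_combination yK (n + 1) * L1 - yK (n + 2) * L0 + X1 ^ 2 * X2 ^ 2 * ih

/-- Every term of the sequence `x_{n+1} = (x_n^2+1)/x_{n-1}` is a Laurent polynomial in
`x₁, x₂` with nonnegative integer coefficients. -/
theorem stmt1 (x : ℕ → Kfield) (h1 : x 1 = X1) (h2 : x 2 = X2)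
    (hrec : ∀ n : ℕ, 2 ≤ n → x (n + 1) = (x n ^ 2 + 1) / x (n - 1)) :
    ∀ n : ℕ, 1 ≤ n → ∃ (a b : ℕ) (p : MvPolynomial (Fin 2) ℕ),
      x n = X1 ^ (-(a : ℤ)) * X2 ^ (-(b : ℤ)) *
        MvPolynomial.eval₂ (Nat.castRingHom Kfield) ![X1, X2] p := by
  have key : ∀ k : ℕ, x (k + 2) * X1 ^ k * X2 ^ k = yK k * X2 ∧
      x (k + 3) * X1 ^ (k + 1) * X2 ^ (k + 1) = yK (k + 1) * X2 := by
    intro k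
    induction k with
    | zero =>
        constructor
        · simp [h2, yK_zero]
        · have h3 : x 3 = (x 2 ^ 2 + 1) / x 1 := by
            have := hrec 2 (by norm_num)
            simpa using this
          rw [h3, h1, h2]
          have hy1 : yK 1 = X2 ^ 2 + 1 := by
            rw [yK_succ, yK_zero, zK_zero]; ring
          rw [hy1]
          field_simp [X1_ne]
          ring
    | succ n ih =>
        refine ⟨ih.2, ?_⟩
        have hx2 : x (n + 2) ≠ 0 := by
          intro h
          have := ih.1
          rw [h, zero_mul, zero_mul] at this
          rcases mul_eq_zero.mp this.symm with h' | h'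
          · exact yK_ne n h'
          · exact X2_ne h'
        have e1 : x (n + 4) * x (n + 2) = x (n + 3) ^ 2 + 1 := by
          have h4 : x (n + 4) = (x (n + 3) ^ 2 + 1) / x (n + 2) := by
            have := hrec (n + 3) (by omega)
            simpa using this
          rw [h4, div_mul_cancel₀ _ hx2]
        have G := yK_quad n
        have ih1 := ih.1
        have ih2 := ih.2
        apply mul_right_cancel₀ (show yK n * X2 ≠ 0 from mul_ne_zero (yK_ne n) X2_ne)
        linear_combination
          (-(x (n + 4) * X1 ^ 2 * X2 ^ 2 * X1 ^ n * X2 ^ n)) * ih1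
          + (X1 ^ n) ^ 2 * (X2 ^ n) ^ 2 * X1 ^ 2 * X2 ^ 2 * e1
          + (x (n + 3) * X1 ^ n * X2 ^ n * X1 * X2 + yK (n + 1) * X2) * ih2
          - X2 ^ 2 * G
  intro n hn
  match n, hn with
  | 1, _ =>
      refine ⟨0, 0, X 0, ?_⟩
      simp [h1, Ehom]
  | (k + 2), _ =>
      refine ⟨k, k, X 1 * (pq k).1, ?_⟩
      have hk := (key k).1
      have hE : MvPolynomial.eval₂ (Nat.castRingHom Kfield) ![X1, X2] (X 1 * (pq k).1)
          = X2 * yK k := by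
        have : Ehom (X 1 * (pq k).1) = Ehom (X 1) * Ehom (pq k).1 := map_mul _ _ _
        simpa [Ehom, yK] using this
      have hxk : x (k + 2) = yK k * X2 / (X1 ^ k * X2 ^ k) := by
        rw [eq_div_iff (mul_ne_zero (pow_ne_zero _ X1_ne) (pow_ne_zero _ X2_ne))]
        linear_combination hk
      rw [hxk, hE, zpow_neg, zpow_neg, zpow_natCast, zpow_natCast]
      field_simp
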